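/- arXiv:1509.05854 — 4 statements merged into one kernel-verified Lean document; each statement's English description precedes it below -/
import Mathlib

section
/- Let n ≥ 1, let t₁, …, tₙ ∈ ℂ be pairwise distinct, and let k ≥ 0. Then Σ_{i=1}^n tᵢ^{n−1+k}/∏_{j≠i}(tᵢ − tⱼ) = h_k(t₁, …, tₙ), the complete homogeneous symmetric polynomial of degree k evaluated at t₁, …, tₙ. -/
/-!
The left-hand side is the divided difference `f[t₁, …, tₙ]` of `f x = x ^ (n - 1 + k)`.
Multiplying `f` by `x` gives `(x f)[t₀, …, tₙ] = t₀ f[t₀, …, tₙ] + f[t₁, …, tₙ]`, because the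
factor `tᵢ - t₀` cancels against the denominator; splitting off the exponent of `t₀` gives the
same recurrence `h_{k+1}(t₀, …, tₙ) = t₀ h_k(t₀, …, tₙ) + h_{k+1}(t₁, …, tₙ)` for the complete
homogeneous polynomials. This reduces everything to `k = 0`, where `x ^ (n - 1)[t₁, …, tₙ] = 1`
is the leading coefficient of the Lagrange interpolant of `x ^ (n - 1)`.
-/

/-- The complete homogeneous symmetric polynomial of degree `k` in `n` variables, evaluated
at `t`: the sum of all monomials of total degree `k`. -/
noncomputable def completeHomogeneous (n k : ℕ) (t : Fin n → ℂ) : ℂ :=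
  ∑ c ∈ Finset.Nat.antidiagonalTuple n k, ∏ i : Fin n, t i ^ c i

open Finset

theorem Fin.prod_compl_singleton_succ {M : Type*} [CommMonoid M] {n : ℕ}
    (g : Fin (n + 1) → M) (i : Fin n) :
    ∏ j ∈ ({i.succ}ᶜ : Finset (Fin (n + 1))), g j
      = g 0 * ∏ j ∈ ({i}ᶜ : Finset (Fin n)), g j.succ := by
  rw [compl_singleton, compl_singleton, ← filter_ne' univ, ← filter_ne' univ, prod_filter,
    prod_filter, Fin.prod_univ_succ]
  simp [(Fin.succ_ne_zero i).symm]

theorem Finset.Nat.sum_antidiagonalTuple_succ {M : Type*} [AddCommMonoid M] (k n : ℕ)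
    (f : (Fin (k + 1) → ℕ) → M) :
    ∑ c ∈ antidiagonalTuple (k + 1) n, f c
      = ∑ p ∈ antidiagonal n, ∑ c ∈ antidiagonalTuple k p.2, f (Fin.cons p.1 c) := by
  simp only [Finset.sum, antidiagonalTuple, Multiset.Nat.antidiagonalTuple,
    List.Nat.antidiagonalTuple, List.flatMap_def, Multiset.map_coe, Multiset.sum_coe,
    List.map_flatten, List.sum_flatten, List.map_map]
  rw [show (antidiagonal n).val = (List.Nat.antidiagonal n : Multiset _) from rfl,
    Multiset.map_coe, Multiset.sum_coe]
  simp only [Function.comp_def, List.map_map]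

section DividedDifference

variable {K : Type*} [Field K]

noncomputable def dividedDifference {n : ℕ} (f : K → K) (t : Fin n → K) : K :=
  ∑ i, f (t i) / ∏ j ∈ ({i}ᶜ : Finset (Fin n)), (t i - t j)

theorem dividedDifference_pow_eq_one {n : ℕ} {t : Fin (n + 1) → K}
    (ht : Function.Injective t) : dividedDifference (· ^ n) t = 1 := by
  have h := Lagrange.coeff_eq_sum (s := univ) ht.injOn (P := Polynomial.X ^ n)
    (by rw [Polynomial.degree_X_pow, card_fin]; exact_mod_cast n.lt_succ_self)
  simpa [dividedDifference, compl_singleton] using h.symm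

theorem dividedDifference_id_mul {n : ℕ} (f : K → K) (t : Fin (n + 1) → K)
    (ht : ∀ i : Fin n, t i.succ ≠ t 0) :
    dividedDifference (fun x => x * f x) t
      = t 0 * dividedDifference f t + dividedDifference f (Fin.tail t) := by
  rw [← sub_eq_iff_eq_add']
  simp only [dividedDifference, mul_sum, ← sum_sub_distrib, ← mul_div_assoc, ← sub_div,
    ← sub_mul]
  rw [Fin.sum_univ_succ, sub_self, zero_mul, zero_div, zero_add]
  refine sum_congr rfl fun i _ => ?_
  rw [Fin.prod_compl_singleton_succ, mul_div_mul_left _ _ (sub_ne_zero.2 (ht i))]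
  rfl

end DividedDifference

theorem completeHomogeneous_zero_right (n : ℕ) (t : Fin n → ℂ) :
    completeHomogeneous n 0 t = 1 := by
  simp [completeHomogeneous, Nat.antidiagonalTuple_zero_right]

theorem completeHomogeneous_zero_succ (k : ℕ) (t : Fin 0 → ℂ) :
    completeHomogeneous 0 (k + 1) t = 0 := by
  simp [completeHomogeneous]

theorem completeHomogeneous_succ (n k : ℕ) (t : Fin (n + 1) → ℂ) :
    completeHomogeneous (n + 1) k t
      = ∑ p ∈ antidiagonal k, t 0 ^ p.1 * completeHomogeneous n p.2 (Fin.tail t) := by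
  simp only [completeHomogeneous, Nat.sum_antidiagonalTuple_succ, Fin.prod_univ_succ,
    Fin.cons_zero, Fin.cons_succ, mul_sum, Fin.tail]

theorem completeHomogeneous_succ_succ (n k : ℕ) (t : Fin (n + 1) → ℂ) :
    completeHomogeneous (n + 1) (k + 1) t
      = t 0 * completeHomogeneous (n + 1) k t + completeHomogeneous n (k + 1) (Fin.tail t) := by
  rw [completeHomogeneous_succ, Nat.sum_antidiagonal_succ, completeHomogeneous_succ, mul_sum]
  simp only [pow_zero, one_mul, pow_succ', mul_assoc, add_comm]

theorem dividedDifference_pow_eq_completeHomogeneous :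
    ∀ (n k : ℕ) (t : Fin (n + 1) → ℂ), Function.Injective t →
      dividedDifference (· ^ (n + k)) t = completeHomogeneous (n + 1) k t
  | n, 0, t, ht => by
    rw [completeHomogeneous_zero_right]
    exact dividedDifference_pow_eq_one ht
  | n, k + 1, t, ht => by
    have ht0 : ∀ i : Fin n, t i.succ ≠ t 0 := fun i h => Fin.succ_ne_zero i (ht h)
    simp only [← add_assoc, pow_succ']
    rw [dividedDifference_id_mul _ t ht0, completeHomogeneous_succ_succ,
      dividedDifference_pow_eq_completeHomogeneous n k t ht]
    congr 1
    cases n with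
    | zero => simp [dividedDifference, completeHomogeneous_zero_succ]
    | succ n =>
      rw [add_right_comm, add_assoc]
      exact dividedDifference_pow_eq_completeHomogeneous n (k + 1) (Fin.tail t)
        (ht.comp (Fin.succ_injective _))

/-- For pairwise distinct `t₁, …, tₙ`, `Σᵢ tᵢ^{n-1+k} / ∏_{j≠i}(tᵢ - tⱼ) = h_k(t₁,…,tₙ)`,
the complete homogeneous symmetric polynomial of degree `k`. -/
theorem power_sum_eq_complete_homogeneous (n : ℕ) (hn : 1 ≤ n) (k : ℕ) (t : Fin n → ℂ)
    (ht : Function.Injective t) :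
    ∑ i : Fin n, t i ^ (n - 1 + k) / ∏ j ∈ ({i}ᶜ : Finset (Fin n)), (t i - t j) =
      completeHomogeneous n k t := by
  obtain ⟨m, rfl⟩ := Nat.exists_eq_add_of_le' hn
  exact dividedDifference_pow_eq_completeHomogeneous m k t ht
end

section
/- Let n ≥ 1, let V ∈ ℂ[z₁,…,zₙ] be a symmetric polynomial, and let t₁,…,tₙ ∈ ℂ be pairwise distinct. Then (1/n!) · Res_{z₁=∞} ⋯ Res_{zₙ=∞} [ V(z₁,…,zₙ) ∏_{i≠j}(zᵢ − zⱼ) / ∏_{i=1}^n ∏_{j=1}^n (tᵢ − zⱼ) ] = V(t₁,…,tₙ). -/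
/-!
By partial fractions, `Q(z) / ∏ᵢ (tᵢ - z)` is a polynomial plus `∑ᵢ cᵢ / (tᵢ - z)` with
`cᵢ = Q(tᵢ) / ∏_{k ≠ i} (t_k - tᵢ)`, so its residue at infinity is `∑ᵢ cᵢ`. Peeling off one variable
at a time, the inner residues of `P(z) / ∏ⱼ ∏ᵢ (tᵢ - zⱼ)` are again of this form in the outer
variable, hence the iterated residue is `∑_f P(t ∘ f) / ∏ⱼ ∏_{k ≠ f j} (t_k - t_{f j})` over all
maps `f`. For `P = V · ∏_{i ≠ j} (zᵢ - zⱼ)` the terms with non-injective `f` vanish, and by the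
symmetry of `V` each of the `n!` permutations contributes `V(t)`.
-/

open Filter

/-- The residue at infinity: minus the coefficient of `z⁻¹` in the Laurent expansion at
infinity, realized as minus the limit of `(2πi)⁻¹ ∮_{|z|=R} F` as `R → ∞`. -/
noncomputable def resInf (F : ℂ → ℂ) : ℂ :=
  limUnder atTop (fun R : ℝ => -((2 * Real.pi * Complex.I)⁻¹ * ∮ z in C(0, R), F z))

/-- Iterated residue at infinity `Res_{z₁=∞} ⋯ Res_{z_m=∞} F`, taken first in the last
variable `z_m`, then `z_{m-1}`, and so on. -/
noncomputable def iterResInf : (m : ℕ) → ((Fin m → ℂ) → ℂ) → ℂ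
  | 0, F => F (fun i => i.elim0)
  | m + 1, F => resInf (fun z => iterResInf m (fun w => F (Fin.cons z w)))

open Finset Polynomial

section PartialFractions

variable {K ι : Type*} [Field K] [Fintype ι] [DecidableEq ι]

theorem Polynomial.exists_eval_div_prod_sub_eq {s : ι → K} (hs : Function.Injective s)
    (Q : K[X]) :
    ∃ q : K[X], ∀ z, (∀ i, z ≠ s i) →
      Q.eval z / ∏ i, (s i - z) =
        q.eval z + ∑ i, Q.eval (s i) / (∏ k ∈ univ.erase i, (s k - s i)) / (s i - z) := by
  set c : ι → K := fun i => Q.eval (s i) / ∏ k ∈ univ.erase i, (s k - s i)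
  set R : K[X] := Q - ∑ i, C (c i) * ∏ k ∈ univ.erase i, (C (s k) - X)
  have hR : ∀ j, R.IsRoot (s j) := by
    intro j
    have hj : ∏ k ∈ univ.erase j, (s k - s j) ≠ 0 :=
      prod_ne_zero_iff.2 fun k hk => sub_ne_zero.2 (hs.ne (ne_of_mem_erase hk))
    simp only [IsRoot, R, eval_sub, eval_finsetSum, eval_mul, eval_C, eval_prod, eval_X]
    rw [sum_eq_single j, div_mul_cancel₀ _ hj, sub_self]
    · exact fun i _ hij => mul_eq_zero_of_right _
        (prod_eq_zero (mem_erase.2 ⟨Ne.symm hij, mem_univ j⟩) (sub_self _))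
    · simp
  have hcop : ((univ : Finset ι) : Set ι).Pairwise
      (Function.onFun IsCoprime fun i => C (s i) - X) := fun i _ j _ hij => by
    simpa only [Function.onFun, neg_sub] using (pairwise_coprime_X_sub_C hs hij).neg_neg
  obtain ⟨q, hq⟩ : ∏ i, (C (s i) - X) ∣ R :=
    prod_dvd_of_coprime hcop fun i _ => by
      rw [← neg_sub, neg_dvd]
      exact dvd_iff_isRoot.2 (hR i)
  refine ⟨q, fun z hz => ?_⟩
  have hQ : Q.eval z =
      (∏ i, (s i - z)) * q.eval z + ∑ i, c i * ∏ k ∈ univ.erase i, (s k - z) := by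
    have := congrArg (eval z) hq
    simp only [R, eval_sub, eval_finsetSum, eval_mul, eval_C, eval_prod, eval_X] at this
    linear_combination this
  have hD : ∀ t : Finset ι, ∏ k ∈ t, (s k - z) ≠ 0 := fun t =>
    prod_ne_zero_iff.2 fun k _ => sub_ne_zero.2 (hz k).symm
  rw [hQ, add_div, mul_div_cancel_left₀ _ (hD univ), sum_div]
  congr 1
  refine sum_congr rfl fun i _ => ?_
  rw [← mul_prod_erase univ (fun k => s k - z) (mem_univ i),
    mul_div_mul_right _ _ (hD _)]

end PartialFractions

section Residue

open Complex Metric Real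

theorem resInf_eq_of_eventually_circleIntegral_eq {F : ℂ → ℂ} {a : ℂ}
    (h : ∀ᶠ R : ℝ in atTop, (∮ z in C(0, R), F z) = -(2 * π * I) * a) : resInf F = a := by
  refine Tendsto.limUnder_eq (tendsto_const_nhds.congr' ?_)
  filter_upwards [h] with R hR
  rw [hR]
  field_simp [two_pi_I_ne_zero]

variable {ι : Type*} [Fintype ι] [DecidableEq ι]

theorem circleIntegral_eval_div_prod_sub {s : ι → ℂ} (hs : Function.Injective s) (Q : ℂ[X])
    {R : ℝ} (hR₀ : 0 ≤ R) (hR : ∀ i, ‖s i‖ < R) :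
    (∮ z in C(0, R), Q.eval z / ∏ i, (s i - z)) =
      -(2 * π * I) * ∑ i, Q.eval (s i) / ∏ k ∈ univ.erase i, (s k - s i) := by
  obtain ⟨q, hq⟩ := exists_eval_div_prod_sub_eq hs Q
  set c : ι → ℂ := fun i => Q.eval (s i) / ∏ k ∈ univ.erase i, (s k - s i)
  have hpole : ∀ z ∈ sphere (0 : ℂ) R, ∀ i, z ≠ s i := by
    rintro z hz i rfl
    exact (hR i).ne (by simpa using hz)
  have hcont : ∀ i, ContinuousOn (fun z => c i / (s i - z)) (sphere 0 R) := fun i =>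
    continuousOn_const.div (continuousOn_const.sub continuousOn_id) fun z hz =>
      sub_ne_zero.2 (hpole z hz i).symm
  have hpoly : (∮ z in C(0, R), q.eval z) = 0 :=
    q.differentiable.diffContOnCl.circleIntegral_eq_zero hR₀
  have hsimple : ∀ i, (∮ z in C(0, R), c i / (s i - z)) = -(2 * π * I) * c i := by
    intro i
    have : (fun z => c i / (s i - z)) = fun z => -c i * (z - s i)⁻¹ := by
      funext z
      rw [← neg_sub, div_neg, neg_mul, div_eq_mul_inv]
    rw [this, circleIntegral.integral_const_mul,
      circleIntegral.integral_sub_inv_of_mem_ball (by simpa using hR i)]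
    ring
  rw [circleIntegral.integral_congr hR₀ fun z hz => hq z (hpole z hz),
    circleIntegral.integral_add (q.continuous.continuousOn.circleIntegrable hR₀)
      ((continuousOn_finsetSum _ fun i _ => hcont i).circleIntegrable hR₀),
    circleIntegral.integral_fun_sum fun i _ => (hcont i).circleIntegrable hR₀, hpoly, zero_add,
    mul_sum]
  exact sum_congr rfl fun i _ => hsimple i

theorem resInf_eval_div_prod_sub {s : ι → ℂ} (hs : Function.Injective s) (Q : ℂ[X]) :
    resInf (fun z => Q.eval z / ∏ i, (s i - z)) =
      ∑ i, Q.eval (s i) / ∏ k ∈ univ.erase i, (s k - s i) := by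
  refine resInf_eq_of_eventually_circleIntegral_eq ?_
  filter_upwards [eventually_ge_atTop 0, eventually_all.2 fun i => eventually_gt_atTop ‖s i‖]
    with R hR₀ hR
  exact circleIntegral_eval_div_prod_sub hs Q hR₀ hR

end Residue

section IteratedResidue

theorem MvPolynomial.eval_cons_eq_eval_eval_finSuccEquiv {R : Type*} [CommSemiring R] {m : ℕ}
    (P : MvPolynomial (Fin (m + 1)) R) (a : R) (w : Fin m → R) :
    MvPolynomial.eval (Fin.cons a w) P =
      MvPolynomial.eval w ((MvPolynomial.finSuccEquiv R m P).eval (MvPolynomial.C a)) := by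
  rw [MvPolynomial.eval_polynomial_eval_finSuccEquiv, MvPolynomial.eval_C]
  rfl

variable {ι : Type*} [Fintype ι] [DecidableEq ι]

theorem iterResInf_eval_div_prod_prod_sub {t : ι → ℂ} (ht : Function.Injective t) :
    ∀ {m : ℕ} (P : MvPolynomial (Fin m) ℂ),
      iterResInf m (fun z => MvPolynomial.eval z P / ∏ j, ∏ i, (t i - z j)) =
        ∑ f : Fin m → ι, MvPolynomial.eval (t ∘ f) P / ∏ j, ∏ k ∈ univ.erase (f j), (t k - t (f j))
  | 0, P => by
    simp only [iterResInf, univ_unique, sum_singleton, univ_eq_empty, prod_empty, div_one]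
    congr 2
    exact funext fun i => i.elim0
  | m + 1, P => by
    set E : (Fin m → ι) → ℂ := fun f => ∏ j, ∏ k ∈ univ.erase (f j), (t k - t (f j))
    set Q : ℂ[X] := ∑ f : Fin m → ι,
      C (E f)⁻¹ * (MvPolynomial.finSuccEquiv ℂ m P).map (MvPolynomial.eval (t ∘ f))
    -- For fixed `z₀` the induction hypothesis applies to `P(z₀, ·)`, and the result is a
    -- polynomial in `z₀` over `∏ᵢ (tᵢ - z₀)`, to which the one-variable formula applies.
    have hinner : ∀ z₀, iterResInf m (fun w => MvPolynomial.eval (Fin.cons z₀ w) P /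
        ∏ j, ∏ i, (t i - (Fin.cons z₀ w : Fin (m + 1) → ℂ) j)) = Q.eval z₀ / ∏ i, (t i - z₀) := by
      intro z₀
      set P₀ := (MvPolynomial.finSuccEquiv ℂ m P).eval (MvPolynomial.C z₀)
      have hsplit : (fun w => MvPolynomial.eval (Fin.cons z₀ w) P /
          ∏ j, ∏ i, (t i - (Fin.cons z₀ w : Fin (m + 1) → ℂ) j)) = fun w =>
          MvPolynomial.eval w (MvPolynomial.C (∏ i, (t i - z₀))⁻¹ * P₀) /
            ∏ j, ∏ i, (t i - w j) := by
        funext w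
        rw [Fin.prod_univ_succ, map_mul, MvPolynomial.eval_C,
          MvPolynomial.eval_cons_eq_eval_eval_finSuccEquiv]
        simp only [Fin.cons_zero, Fin.cons_succ]
        ring
      rw [hsplit, iterResInf_eval_div_prod_prod_sub ht, eval_finsetSum, sum_div]
      refine sum_congr rfl fun f _ => ?_
      rw [map_mul, MvPolynomial.eval_C, eval_mul, eval_C, ← MvPolynomial.eval_eq_eval_mv_eval',
        MvPolynomial.eval_cons_eq_eval_eval_finSuccEquiv]
      ring
    rw [iterResInf]
    simp only [hinner]
    rw [resInf_eval_div_prod_sub ht Q, ← (Fin.consEquiv fun _ => ι).sum_comp,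
      Fintype.sum_prod_type]
    refine sum_congr rfl fun i _ => ?_
    rw [eval_finsetSum, sum_div]
    refine sum_congr rfl fun f _ => ?_
    rw [eval_mul, eval_C, ← MvPolynomial.eval_eq_eval_mv_eval']
    simp only [Fin.consEquiv, Equiv.coe_fn_mk, Fin.comp_cons, Fin.prod_univ_succ, Fin.cons_zero,
      Fin.cons_succ, E]
    ring

end IteratedResidue

section Permutations

variable {α : Type*} [Fintype α]

theorem Finset.prod_univ_offDiag_comp_perm {M : Type*} [CommMonoid M] (σ : Equiv.Perm α)
    (g : α → α → M) : ∏ p ∈ univ.offDiag, g (σ p.1) (σ p.2) = ∏ p ∈ univ.offDiag, g p.1 p.2 :=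
  prod_equiv (σ.prodCongr σ) (by simp) (by simp)

variable [DecidableEq α]

theorem Fintype.sum_fun_eq_sum_perm {M : Type*} [AddCommMonoid M] {g : (α → α) → M}
    (hg : ∀ f, ¬Function.Injective f → g f = 0) : ∑ f, g f = ∑ σ : Equiv.Perm α, g σ := by
  let coe : Equiv.Perm α ↪ (α → α) := ⟨(⇑), DFunLike.coe_injective⟩
  calc ∑ f, g f = ∑ f ∈ univ.map coe, g f := by
        refine (Finset.sum_subset (subset_univ _) fun f _ hf => hg f fun hinj => hf ?_).symm
        exact mem_map.2 ⟨.ofBijective f (Finite.injective_iff_bijective.1 hinj), mem_univ _, rfl⟩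
    _ = ∑ σ : Equiv.Perm α, g σ := Finset.sum_map univ coe g

theorem Finset.prod_univ_offDiag_eq_prod_prod_erase {M : Type*} [CommMonoid M]
    (g : α → α → M) : ∏ p ∈ univ.offDiag, g p.1 p.2 = ∏ j, ∏ k ∈ univ.erase j, g k j :=
  prod_finset_product_right' _ _ _ fun p => by simp [and_comm]

theorem Fintype.sum_fun_mul_prod_offDiag_div_eq {K : Type*} [Field K] {t : α → K}
    (ht : Function.Injective t) (v : (α → K) → K) (hv : ∀ σ : Equiv.Perm α, v (t ∘ σ) = v t) :
    ∑ f : α → α, v (t ∘ f) * (∏ p ∈ univ.offDiag, (t (f p.1) - t (f p.2))) /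
        ∏ j, ∏ k ∈ univ.erase (f j), (t k - t (f j)) =
      (Fintype.card α).factorial * v t := by
  have hA : ∏ p ∈ univ.offDiag, (t p.1 - t p.2) ≠ 0 :=
    prod_ne_zero_iff.2 fun p hp => sub_ne_zero.2 (ht.ne (mem_offDiag.1 hp).2.2)
  rw [sum_fun_eq_sum_perm fun f hf => ?noninjective]
  case noninjective =>
    obtain ⟨a, b, hab, hne⟩ := Function.not_injective_iff.1 hf
    rw [prod_eq_zero (i := (a, b)) (mem_offDiag.2 ⟨mem_univ a, mem_univ b, hne⟩) (by simp [hab]),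
      mul_zero, zero_div]
  have hperm : ∀ σ : Equiv.Perm α, v (t ∘ σ) * (∏ p ∈ univ.offDiag, (t (σ p.1) - t (σ p.2))) /
      ∏ j, ∏ k ∈ univ.erase (σ j), (t k - t (σ j)) = v t := fun σ => by
    rw [hv, prod_univ_offDiag_comp_perm σ fun a b => t a - t b,
      Equiv.prod_comp σ fun j => ∏ k ∈ univ.erase j, (t k - t j),
      ← prod_univ_offDiag_eq_prod_prod_erase, mul_div_assoc, div_self hA, mul_one]
  simp only [hperm, sum_const, card_univ, Fintype.card_perm, nsmul_eq_mul]

end Permutations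

theorem grassmannian_residue_formula_point_general (n : ℕ)
    (V : MvPolynomial (Fin n) ℂ) (hV : V.IsSymmetric)
    (t : Fin n → ℂ) (ht : Function.Injective t) :
    (1 / (n.factorial : ℂ)) *
      iterResInf n (fun z =>
        (MvPolynomial.eval z V * ∏ p ∈ (Finset.univ : Finset (Fin n)).offDiag, (z p.1 - z p.2)) /
          ∏ i : Fin n, ∏ j : Fin n, (t i - z j)) =
    MvPolynomial.eval t V := by
  set Δ : MvPolynomial (Fin n) ℂ := ∏ p ∈ univ.offDiag, (MvPolynomial.X p.1 - MvPolynomial.X p.2)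
  have hΔ : ∀ z, MvPolynomial.eval z Δ = ∏ p ∈ univ.offDiag, (z p.1 - z p.2) := by
    simp [Δ]
  have hsymm : ∀ σ : Equiv.Perm (Fin n), MvPolynomial.eval (t ∘ σ) V = MvPolynomial.eval t V :=
    fun σ => by rw [← MvPolynomial.eval_rename, hV σ]
  calc _ = 1 / (n.factorial : ℂ) * ∑ f : Fin n → Fin n,
        MvPolynomial.eval (t ∘ f) (V * Δ) / ∏ j, ∏ k ∈ univ.erase (f j), (t k - t (f j)) := by
        rw [← iterResInf_eval_div_prod_prod_sub ht]
        simp only [map_mul, hΔ, prod_comm (s := univ) (t := univ) (f := fun i j => t i - _)]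
    _ = MvPolynomial.eval t V := by
        simp only [map_mul, hΔ, Function.comp_apply]
        rw [Fintype.sum_fun_mul_prod_offDiag_div_eq ht (MvPolynomial.eval · V) hsymm,
          Fintype.card_fin, one_div,
          inv_mul_cancel_left₀ (Nat.cast_ne_zero.2 n.factorial_ne_zero)]

/-- The `m = n` case of the Grassmannian residue formula: `Grass_n(ℂⁿ)` is a point, so the
iterated residue evaluates `V` at `(t₁, …, tₙ)`. -/
theorem grassmannian_residue_formula_point (n : ℕ) (hn : 1 ≤ n)
    (V : MvPolynomial (Fin n) ℂ) (hV : V.IsSymmetric)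
    (t : Fin n → ℂ) (ht : Function.Injective t) :
    (1 / (n.factorial : ℂ)) *
      iterResInf n (fun z =>
        (MvPolynomial.eval z V * ∏ p ∈ (Finset.univ : Finset (Fin n)).offDiag, (z p.1 - z p.2)) /
          ∏ i : Fin n, ∏ j : Fin n, (t i - z j)) =
    MvPolynomial.eval t V :=
  grassmannian_residue_formula_point_general n V hV t ht
end

section
/- Let 0 < m < n and let t₁,…,tₙ ∈ ℂ be pairwise distinct. Then Σ_{S ⊆ {1,…,n}, |S| = m} 1/∏_{i∈S, j∉S}(tᵢ − tⱼ) = 0. -/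
/-!
Write `D(S) = ∏_{i ∈ S, j ∉ S} (tᵢ - tⱼ)`. Grouping the `m`-subsets by a chosen element `a`
and the remaining `(m-1)`-subset `S'`, one finds
`D(S' ∪ {a}) · ∏_{i ∈ S'} (tᵢ - tₐ) = D(S') · ∏_{j ∉ S', j ≠ a} (tₐ - tⱼ)`, so the sum over
`a ∉ S'` is `D(S')⁻¹` times a Lagrange sum `∑ₐ p(tₐ) / ∏_{j ≠ a} (tₐ - tⱼ)` over the `n - m + 1`
nodes outside `S'`, with `p` of degree `m - 1`. This sum is the top coefficient of the
interpolant of `p`, hence zero as long as `2m ≤ n`; the case `2m > n` follows from the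
symmetry `S ↦ Sᶜ`, under which `D` changes only by a sign.
-/

open Finset Polynomial

theorem Lagrange.sum_eval_div_prod_sub_eq_zero {F ι : Type*} [Field F] [DecidableEq ι]
    {s : Finset ι} {v : ι → F} (hvs : Set.InjOn v s) {P : F[X]} (hP : P.natDegree + 1 < #s) :
    ∑ i ∈ s, P.eval (v i) / ∏ j ∈ s.erase i, (v i - v j) = 0 := by
  have hdeg : P.degree < #s :=
    degree_le_natDegree.trans_lt (by exact_mod_cast (Nat.lt_succ_self _).trans hP)
  rw [← Lagrange.coeff_eq_sum hvs hdeg]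
  exact coeff_eq_zero_of_natDegree_lt (by omega)

theorem Finset.card_nsmul_sum_powersetCard_succ {ι M : Type*} [Fintype ι] [DecidableEq ι]
    [AddCommMonoid M] (m : ℕ) (f : Finset ι → M) :
    (m + 1) • ∑ S ∈ powersetCard (m + 1) univ, f S =
      ∑ S ∈ powersetCard m univ, ∑ a ∈ Sᶜ, f (insert a S) := by
  calc (m + 1) • ∑ S ∈ powersetCard (m + 1) univ, f S
      = ∑ S ∈ powersetCard (m + 1) univ, ∑ _a ∈ S, f S := by
        rw [smul_sum]
        refine sum_congr rfl fun S hS => ?_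
        rw [sum_const, mem_powersetCard_univ.1 hS]
    _ = ∑ x ∈ (powersetCard (m + 1) univ).sigma id, f x.1 := sum_sigma' _ _ _
    _ = ∑ x ∈ (powersetCard m univ).sigma compl, f (insert x.2 x.1) := by
        refine sum_nbij' (fun x => ⟨x.1.erase x.2, x.2⟩) (fun x => ⟨insert x.2 x.1, x.2⟩)
          ?_ ?_ ?_ ?_ ?_ <;> rintro ⟨S, a⟩ h <;> simp only [mem_sigma, mem_powersetCard_univ,
            id, mem_compl] at h ⊢
        · exact ⟨by rw [card_erase_of_mem h.2, h.1]; rfl, notMem_erase a S⟩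
        · exact ⟨by rw [card_insert_of_notMem h.2, h.1], mem_insert_self a S⟩
        · rw [insert_erase h.2]
        · rw [erase_insert h.2]
        · rw [insert_erase h.2]
    _ = ∑ S ∈ powersetCard m univ, ∑ a ∈ Sᶜ, f (insert a S) :=
        (sum_sigma' _ _ fun S a => f (insert a S)).symm

section CrossDiffProd

variable {ι K : Type*} [Fintype ι] [DecidableEq ι] [Field K]

def crossDiffProd (t : ι → K) (S : Finset ι) : K :=
  ∏ i ∈ S, ∏ j ∈ Sᶜ, (t i - t j)

theorem crossDiffProd_ne_zero {t : ι → K} (ht : Function.Injective t) (S : Finset ι) :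
    crossDiffProd t S ≠ 0 :=
  prod_ne_zero_iff.2 fun _i hi => prod_ne_zero_iff.2 fun _j hj =>
    sub_ne_zero.2 (ht.ne (ne_of_mem_of_not_mem hi (mem_compl.1 hj)))

theorem crossDiffProd_compl (t : ι → K) (S : Finset ι) :
    crossDiffProd t Sᶜ = (-1) ^ (#S * #Sᶜ) * crossDiffProd t S := by
  unfold crossDiffProd
  rw [compl_compl, prod_comm, mul_comm #S, pow_mul, ← prod_const, ← prod_mul_distrib]
  refine prod_congr rfl fun i _ => ?_
  rw [← prod_neg]
  exact prod_congr rfl fun j _ => by ring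

theorem crossDiffProd_insert_mul {a : ι} {S : Finset ι} (t : ι → K) (ha : a ∉ S) :
    crossDiffProd t (insert a S) * ∏ i ∈ S, (t i - t a) =
      crossDiffProd t S * ∏ j ∈ Sᶜ.erase a, (t a - t j) := by
  have hsplit : ∀ i, ∏ j ∈ Sᶜ, (t i - t j) = (t i - t a) * ∏ j ∈ Sᶜ.erase a, (t i - t j) :=
    fun i => (mul_prod_erase _ _ (mem_compl.2 ha)).symm
  unfold crossDiffProd
  rw [compl_insert, prod_insert ha]
  simp only [hsplit, prod_mul_distrib]
  ring

theorem sum_compl_inv_crossDiffProd_insert_eq_zero {t : ι → K} (ht : Function.Injective t)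
    {S : Finset ι} (hS : 2 * #S + 1 < Fintype.card ι) :
    ∑ a ∈ Sᶜ, (crossDiffProd t (insert a S))⁻¹ = 0 := by
  set P : K[X] := ∏ i ∈ S, (C (t i) - X)
  have hP : P.natDegree ≤ #S := (natDegree_prod_le _ _).trans <|
    (sum_le_card_nsmul S _ 1 fun _ _ => by compute_degree).trans_eq (mul_one _)
  have hterm : ∀ a ∈ Sᶜ, (crossDiffProd t (insert a S))⁻¹ =
      (crossDiffProd t S)⁻¹ * (P.eval (t a) / ∏ j ∈ Sᶜ.erase a, (t a - t j)) := by
    intro a ha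
    have hins := crossDiffProd_insert_mul t (mem_compl.1 ha)
    have hnodes : ∏ j ∈ Sᶜ.erase a, (t a - t j) ≠ 0 :=
      prod_ne_zero_iff.2 fun j hj => sub_ne_zero.2 (ht.ne (ne_of_mem_erase hj).symm)
    simp only [P, eval_prod, eval_sub, eval_C, eval_X]
    field_simp [crossDiffProd_ne_zero ht]
    linear_combination -hins
  rw [sum_congr rfl hterm, ← mul_sum,
    Lagrange.sum_eval_div_prod_sub_eq_zero ht.injOn (by rw [card_compl]; omega), mul_zero]

theorem sum_powersetCard_compl_inv_crossDiffProd (t : ι → K) {m : ℕ}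
    (hm : m ≤ Fintype.card ι) :
    ∑ S ∈ powersetCard (Fintype.card ι - m) univ, (crossDiffProd t S)⁻¹ =
      (-1) ^ ((Fintype.card ι - m) * m) * ∑ S ∈ powersetCard m univ, (crossDiffProd t S)⁻¹ := by
  rw [mul_sum]
  refine sum_nbij' compl compl ?_ ?_ ?_ ?_ ?_ <;> intro S hS <;>
    simp only [mem_powersetCard_univ, card_compl, compl_compl] at hS ⊢
  · omega
  · omega
  · rw [crossDiffProd_compl t S, card_compl, hS, Nat.sub_sub_self hm, mul_inv, ← mul_assoc,
      ← inv_pow, ← mul_pow, inv_neg_one, neg_one_mul, neg_neg, one_pow, one_mul]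

theorem sum_powersetCard_inv_crossDiffProd_eq_zero [CharZero K] {t : ι → K}
    (ht : Function.Injective t) {m : ℕ} (hm : 0 < m) (hmn : m < Fintype.card ι) :
    ∑ S ∈ powersetCard m univ, (crossDiffProd t S)⁻¹ = 0 := by
  wlog hle : 2 * m ≤ Fintype.card ι generalizing m
  · have hzero := this (m := Fintype.card ι - m) (by omega) (by omega) (by omega)
    rw [sum_powersetCard_compl_inv_crossDiffProd t hmn.le] at hzero
    exact (mul_eq_zero.1 hzero).resolve_left (pow_ne_zero _ (neg_ne_zero.2 one_ne_zero))
  obtain ⟨k, rfl⟩ : ∃ k, m = k + 1 := ⟨m - 1, by omega⟩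
  have hcount := card_nsmul_sum_powersetCard_succ k fun S => (crossDiffProd t S)⁻¹
  rw [sum_eq_zero fun S hS => sum_compl_inv_crossDiffProd_insert_eq_zero ht
    (by rw [mem_powersetCard_univ.1 hS]; omega), nsmul_eq_mul] at hcount
  exact (mul_eq_zero.1 hcount).resolve_left (Nat.cast_ne_zero.2 k.succ_ne_zero)

end CrossDiffProd

/-- For `0 < m < n` and pairwise distinct `t₁, …, tₙ`, the push-forward of the unit class on
`Grass_m(ℂⁿ)` vanishes: `Σ_{|S|=m} 1 / ∏_{i∈S, j∉S}(tᵢ - tⱼ) = 0`. -/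
theorem grassmannian_unit_class_pushforward_vanishes (m n : ℕ) (hm : 0 < m) (hmn : m < n)
    (t : Fin n → ℂ) (ht : Function.Injective t) :
    ∑ S ∈ Finset.powersetCard m (Finset.univ : Finset (Fin n)),
      1 / ∏ i ∈ S, ∏ j ∈ Sᶜ, (t i - t j) = 0 := by
  simp only [one_div]
  exact sum_powersetCard_inv_crossDiffProd_eq_zero ht hm (by rwa [Fintype.card_fin])
end

section
/- Let n ≥ 1 and let t₁,…,tₙ ∈ ℂ satisfy: all tᵢ ≠ 0, tᵢ ≠ tⱼ and tᵢ + tⱼ ≠ 0 for i ≠ j. Then Σ_{ε ∈ {±1}ⁿ} 1/∏_{1 ≤ i ≤ j ≤ n}(εᵢtᵢ + εⱼtⱼ) = 0 whenever n ≥ 1 and the Lagrangian Grassmannian LG(n) has positive dimension, i.e. for all n ≥ 1 (dim LG(n) = n(n+1)/2 > 0). -/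
/-- The sign `±1` attached to a Boolean. -/
def sgn (b : Bool) : ℂ := if b then 1 else -1


open Finset Polynomial

lemma sgn_ne_zero (b : Bool) : sgn b ≠ 0 := by cases b <;> norm_num [sgn]
lemma sgn_mul_self (b : Bool) : sgn b * sgn b = 1 := by cases b <;> norm_num [sgn]
lemma sgn_not (b : Bool) : sgn (!b) = - sgn b := by cases b <;> norm_num [sgn]

section helpers
-- (verified helpers, inlined later)
variable {M : Type*} [CommMonoid M] {m : ℕ}

lemma Ici_zero_fin : Finset.Ici (0 : Fin (m+1)) = Finset.univ := by ext j; simp [Fin.zero_le]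

lemma prod_Ici_succ (i : Fin m) (f : Fin (m+1) → M) :
    ∏ j ∈ Finset.Ici i.succ, f j = ∏ j ∈ Finset.Ici i, f j.succ := by
  have h : Finset.Ici i.succ = Finset.image Fin.succ (Finset.Ici i) := by
    ext q
    simp only [mem_Ici, mem_image]
    constructor
    · intro h
      rcases Fin.eq_zero_or_eq_succ q with rfl | ⟨j, rfl⟩
      · exact absurd (le_antisymm h (Fin.zero_le _)) (Fin.succ_ne_zero i)
      · exact ⟨j, (Fin.succ_le_succ_iff).mp h, rfl⟩
    · rintro ⟨j, hj, rfl⟩; exact Fin.succ_le_succ_iff.mpr hj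
  rw [h, Finset.prod_image (fun a _ b _ h => Fin.succ_injective _ h)]


lemma prod_erase_zero (g : Fin (m+1) → M) :
    ∏ q ∈ univ.erase (0:Fin (m+1)), g q = ∏ k : Fin m, g k.succ := by
  have h : (univ.erase (0:Fin (m+1))) = Finset.image Fin.succ univ := by
    ext q
    simp only [mem_erase, mem_univ, and_true, mem_image, true_and]
    constructor
    · intro h; rcases Fin.eq_zero_or_eq_succ q with rfl | ⟨j, rfl⟩
      · exact absurd rfl h
      · exact ⟨j, rfl⟩
    · rintro ⟨j, rfl⟩; exact Fin.succ_ne_zero j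
  rw [h, Finset.prod_image (fun a _ b _ h => Fin.succ_injective _ h)]


lemma prod_erase_succ (k : Fin m) (g : Fin (m+1) → M) :
    ∏ q ∈ univ.erase k.succ, g q = g 0 * ∏ l ∈ univ.erase k, g l.succ := by
  have h1 : (univ.erase (Fin.succ k)) = insert (0:Fin (m+1)) (Finset.image Fin.succ (univ.erase k)) := by
    ext q
    simp only [mem_erase, mem_univ, and_true, mem_insert, mem_image, true_and]
    constructor
    · intro h; rcases Fin.eq_zero_or_eq_succ q with rfl | ⟨j, rfl⟩
      · exact Or.inl rfl
      · exact Or.inr ⟨j, fun hj => h (by rw [hj]), rfl⟩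
    · rintro (rfl | ⟨j, hj, rfl⟩)
      · exact (Fin.succ_ne_zero k).symm
      · exact fun h => hj (Fin.succ_injective _ h)
  rw [h1, Finset.prod_insert (by simp [eq_comm, Fin.succ_ne_zero]),
    Finset.prod_image (fun a _ b _ h => Fin.succ_injective _ h)]



lemma partial_fractions {m : ℕ} (hm : m ≠ 0) (a : Fin m → ℂ) (ha : Function.Injective a)
    (x : ℂ) (hx : ∀ k, x ≠ a k) :
    (∏ k, (x - a k))⁻¹ = ∑ k, ((x - a k) * ∏ l ∈ univ.erase k, (a k - a l))⁻¹ := by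
  have hne : (univ : Finset (Fin m)).Nonempty := univ_nonempty_iff.mpr (Fin.pos_iff_nonempty.mp (Nat.pos_of_ne_zero hm))
  have hsum := Lagrange.sum_basis (ha.injOn) hne
  have heval := congrArg (Polynomial.eval x) hsum
  rw [Polynomial.eval_finset_sum, Polynomial.eval_one] at heval
  -- eval of basis
  have hb : ∀ k : Fin m, Polynomial.eval x (Lagrange.basis univ a k)
      = ∏ l ∈ univ.erase k, ((a k - a l)⁻¹ * (x - a l)) := by
    intro k
    rw [Lagrange.basis, Polynomial.eval_prod]
    refine Finset.prod_congr rfl fun l _ => ?_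
    simp [Lagrange.basisDivisor]
  have hP : ∀ l : Fin m, x - a l ≠ 0 := fun l => sub_ne_zero_of_ne (hx l)
  calc (∏ k, (x - a k))⁻¹ = (∑ k, Polynomial.eval x (Lagrange.basis univ a k)) * (∏ k, (x - a k))⁻¹ := by
        rw [heval, one_mul]
    _ = ∑ k, Polynomial.eval x (Lagrange.basis univ a k) * (∏ j, (x - a j))⁻¹ := by
        rw [Finset.sum_mul]
    _ = ∑ k, ((x - a k) * ∏ l ∈ univ.erase k, (a k - a l))⁻¹ := by
        refine Finset.sum_congr rfl fun k _ => ?_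
        rw [hb k, ← Finset.mul_prod_erase _ _ (mem_univ k), Finset.prod_mul_distrib]
        rw [mul_inv, mul_inv, ← Finset.prod_inv_distrib]
        have hPe : ∏ l ∈ univ.erase k, (x - a l) ≠ 0 :=
          Finset.prod_ne_zero_iff.mpr fun l _ => hP l
        have hA : ∏ l ∈ univ.erase k, (a k - a l) ≠ 0 :=
          Finset.prod_ne_zero_iff.mpr fun l hl => sub_ne_zero_of_ne (fun h => (Finset.mem_erase.mp hl).1 (ha h.symm))
        field_simp
        congr 1
        rw [← Finset.prod_mul_distrib, ← Finset.prod_mul_distrib, ← Finset.prod_mul_distrib]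
        refine Finset.prod_eq_one fun l hl => ?_
        have h1 : a k - a l ≠ 0 :=
          sub_ne_zero_of_ne (fun h => (Finset.mem_erase.mp hl).1 (ha h.symm))
        have h2 := hP l
        field_simp



lemma prod_pairs_split {m : ℕ} (g : Fin m → Fin m → ℂ) (hg : ∀ i j, g i j = g j i) (k : Fin m) :
    ∏ i, ∏ j ∈ Finset.Ici i, g i j =
      (∏ j, g k j) * ∏ i, ∏ j ∈ Finset.Ici i, (if i = k ∨ j = k then 1 else g i j) := by
  have split : ∀ i : Fin m, ∀ j : Fin m, g i j =
      (if i = k ∨ j = k then g i j else 1) * (if i = k ∨ j = k then 1 else g i j) := by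
    intro i j; by_cases h : i = k ∨ j = k <;> simp [h]
  calc ∏ i, ∏ j ∈ Finset.Ici i, g i j
      = ∏ i, ∏ j ∈ Finset.Ici i, ((if i = k ∨ j = k then g i j else 1) *
          (if i = k ∨ j = k then 1 else g i j)) := by
        refine Finset.prod_congr rfl fun i _ => Finset.prod_congr rfl fun j _ => split i j
    _ = (∏ i, ∏ j ∈ Finset.Ici i, (if i = k ∨ j = k then g i j else 1)) *
          ∏ i, ∏ j ∈ Finset.Ici i, (if i = k ∨ j = k then 1 else g i j) := by
        rw [← Finset.prod_mul_distrib]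
        exact Finset.prod_congr rfl fun i _ => Finset.prod_mul_distrib
    _ = (∏ j, g k j) * ∏ i, ∏ j ∈ Finset.Ici i, (if i = k ∨ j = k then 1 else g i j) := by
        congr 1
        -- compute the product over pairs containing k
        have h1 : ∀ i : Fin m, (∏ j ∈ Finset.Ici i, (if i = k ∨ j = k then g i j else 1)) =
            if i = k then (∏ j ∈ Finset.Ici k, g k j) else (if i ≤ k then g i k else 1) := by
          intro i
          by_cases hik : i = k
          · subst hik; simp
          · simp only [hik, false_or, if_false]
            rw [Finset.prod_ite_eq' (Finset.Ici i) k (fun j => g i j)]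
            simp [Finset.mem_Ici]
        rw [Finset.prod_congr rfl (fun i _ => h1 i)]
        rw [← Finset.mul_prod_erase _ _ (Finset.mem_univ k)]
        simp only [if_pos rfl]
        have h2 : ∏ i ∈ univ.erase k, (if i = k then ∏ j ∈ Finset.Ici k, g k j
            else if i ≤ k then g i k else 1) = ∏ i ∈ univ.erase k, (if i ≤ k then g i k else 1) := by
          refine Finset.prod_congr rfl fun i hi => ?_
          rw [if_neg (Finset.mem_erase.mp hi).1]
        rw [h2, Finset.prod_ite, Finset.prod_const_one, mul_one]
        have h3 : (univ.erase k).filter (fun i => i ≤ k) = Finset.Iio k := by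
          ext i
          simp only [Finset.mem_filter, Finset.mem_erase, Finset.mem_univ, true_and,
            Finset.mem_Iio, and_true]
          exact ⟨fun ⟨h, h'⟩ => lt_of_le_of_ne h' h, fun h => ⟨ne_of_lt h, le_of_lt h⟩⟩
        rw [h3]
        have h4 : (univ : Finset (Fin m)) = Finset.Iio k ∪ Finset.Ici k := by
          ext i; simp [lt_or_ge i k, Finset.mem_Iio, Finset.mem_Ici, or_comm]
        rw [show (∏ j, g k j) = ∏ j ∈ Finset.Iio k ∪ Finset.Ici k, g k j by rw [← h4]]
        rw [Finset.prod_union (by simp [Finset.disjoint_left, not_le])]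
        rw [mul_comm]
        congr 1
        exact Finset.prod_congr rfl fun i _ => (hg i k)


end helpers


/-- The push-forward of the unit class over the Lagrangian Grassmannian `LG(n)` vanishes:
the fixed-point sum over sign vectors `ε ∈ {±1}ⁿ` of the reciprocals of the equivariant Euler
classes `∏_{i≤j}(εᵢtᵢ + εⱼtⱼ)` is zero. -/
theorem lagrangian_unit_class_pushforward_vanishes (n : ℕ) (hn : 1 ≤ n) (t : Fin n → ℂ)
    (h0 : ∀ i, t i ≠ 0) (ht : ∀ i j, i ≠ j → t i ≠ t j)
    (hsum : ∀ i j, i ≠ j → t i + t j ≠ 0) :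
    ∑ ε : Fin n → Bool,
      1 / ∏ i : Fin n, ∏ j ∈ Finset.Ici i, (sgn (ε i) * t i + sgn (ε j) * t j) = 0 := by
  obtain ⟨m, rfl⟩ : ∃ m, n = m + 1 := ⟨n - 1, (Nat.succ_pred_eq_of_pos hn).symm⟩
  clear hn
  set x : ℂ := t 0 with hxdef
  -- the nodes of the partial fraction decomposition
  set A : Bool → (Fin m → Bool) → Fin (m+1) → ℂ :=
    fun b ε' => Fin.cons 0 (fun k => -(sgn b * (sgn (ε' k) * t k.succ))) with hAdef
  set E : (Fin m → Bool) → ℂ :=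
    fun ε' => ∏ i : Fin m, ∏ j ∈ Finset.Ici i,
      (sgn (ε' i) * t i.succ + sgn (ε' j) * t j.succ) with hEdef
  set T : Bool → (Fin m → Bool) → Fin (m+1) → ℂ := fun b ε' p =>
    (2 * (sgn b)^(m+1) * E ε' *
      ((x - A b ε' p) * ∏ q ∈ univ.erase p, (A b ε' p - A b ε' q)))⁻¹ with hTdef
  -- injectivity of nodes and x avoids nodes
  have hsucc_ne : ∀ (k l : Fin m), k ≠ l → k.succ ≠ l.succ :=
    fun k l hkl h => hkl (Fin.succ_injective _ h)
  have hAinj : ∀ b ε', Function.Injective (A b ε') := by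
    intro b ε' p q h
    have hvne : ∀ (c : Bool) (l : Fin m), sgn b * (sgn c * t l.succ) ≠ 0 :=
      fun c l => mul_ne_zero (sgn_ne_zero b) (mul_ne_zero (sgn_ne_zero c) (h0 l.succ))
    induction p using Fin.cases with
    | zero =>
      induction q using Fin.cases with
      | zero => rfl
      | succ l =>
        rw [hAdef] at h; simp only [Fin.cons_zero, Fin.cons_succ] at h
        exact absurd (neg_eq_zero.mp h.symm) (hvne _ l)
    | succ k =>
      induction q using Fin.cases with
      | zero =>
        rw [hAdef] at h; simp only [Fin.cons_zero, Fin.cons_succ] at h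
        exact absurd (neg_eq_zero.mp h) (hvne _ k)
      | succ l =>
        rw [hAdef] at h; simp only [Fin.cons_succ] at h
        have h2 : sgn (ε' k) * t k.succ = sgn (ε' l) * t l.succ :=
          mul_left_cancel₀ (sgn_ne_zero b) (neg_inj.mp h)
        by_contra hne
        have hkl : k ≠ l := fun hh => hne (by rw [hh])
        cases hk : ε' k <;> cases hl : ε' l <;> rw [hk, hl] at h2 <;>
          simp only [sgn, if_true, if_false, one_mul, neg_one_mul, Bool.false_eq_true] at h2
        · exact ht k.succ l.succ (hsucc_ne k l hkl) (neg_inj.mp h2)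
        · exact hsum k.succ l.succ (hsucc_ne k l hkl)
            (by rw [← h2]; ring)
        · exact hsum k.succ l.succ (hsucc_ne k l hkl) (by rw [h2]; ring)
        · exact ht k.succ l.succ (hsucc_ne k l hkl) h2
  have hxA : ∀ b ε' p, x ≠ A b ε' p := by
    intro b ε' p
    induction p using Fin.cases with
    | zero => rw [hAdef]; simpa using h0 0
    | succ k =>
      rw [hAdef]; simp only [Fin.cons_succ]
      intro h
      have h0k : (0 : Fin (m+1)) ≠ k.succ := (Fin.succ_ne_zero k).symm
      cases hk : ε' k <;> cases b <;> rw [hk] at h <;>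
        simp only [sgn, if_true, if_false, one_mul, neg_one_mul, neg_neg,
          Bool.false_eq_true, hxdef] at h
      · exact hsum 0 k.succ h0k (by rw [h]; ring)
      · exact ht 0 k.succ h0k h
      · exact ht 0 k.succ h0k h
      · exact hsum 0 k.succ h0k (by rw [h]; ring)
  -- each term equals a sum over nodes
  have key : ∀ (b : Bool) (ε' : Fin m → Bool),
      (1:ℂ) / (∏ i : Fin (m+1), ∏ j ∈ Finset.Ici i,
        (sgn ((Fin.cons b ε' : Fin (m+1) → Bool) i) * t i +
         sgn ((Fin.cons b ε' : Fin (m+1) → Bool) j) * t j))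
      = ∑ p : Fin (m+1), T b ε' p := by
    intro b ε'
    have hD : (∏ i : Fin (m+1), ∏ j ∈ Finset.Ici i,
        (sgn ((Fin.cons b ε' : Fin (m+1) → Bool) i) * t i +
         sgn ((Fin.cons b ε' : Fin (m+1) → Bool) j) * t j))
        = 2 * (sgn b)^(m+1) * (∏ j : Fin (m+1), (x - A b ε' j)) * E ε' := by
      rw [Fin.prod_univ_succ]
      have h1 : ∏ j ∈ Finset.Ici (0 : Fin (m+1)),
          (sgn ((Fin.cons b ε' : Fin (m+1) → Bool) 0) * t 0 +
           sgn ((Fin.cons b ε' : Fin (m+1) → Bool) j) * t j)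
          = 2 * (sgn b)^(m+1) * ∏ j : Fin (m+1), (x - A b ε' j) := by
        rw [Ici_zero_fin, Fin.prod_univ_succ, Fin.prod_univ_succ]
        simp only [Fin.cons_zero, Fin.cons_succ, hAdef, hxdef]
        have h2 : ∀ k : Fin m, sgn b * t 0 + sgn (ε' k) * t k.succ
            = sgn b * (t 0 - -(sgn b * (sgn (ε' k) * t k.succ))) := by
          intro k
          rw [sub_neg_eq_add, mul_add, ← mul_assoc, sgn_mul_self b, one_mul]
        rw [Finset.prod_congr rfl fun k _ => h2 k, Finset.prod_mul_distrib,
          Finset.prod_const, Finset.card_univ, Fintype.card_fin]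
        ring
      have h3 : ∏ i : Fin m, ∏ j ∈ Finset.Ici i.succ,
          (sgn ((Fin.cons b ε' : Fin (m+1) → Bool) i.succ) * t i.succ +
           sgn ((Fin.cons b ε' : Fin (m+1) → Bool) j) * t j) = E ε' := by
        rw [hEdef]
        refine Finset.prod_congr rfl fun i _ => ?_
        rw [prod_Ici_succ]
        exact Finset.prod_congr rfl fun j _ => by simp only [Fin.cons_succ]
      rw [h1, h3]
    rw [one_div, hD, mul_inv, mul_inv,
      partial_fractions (Nat.succ_ne_zero m) (A b ε') (hAinj b ε') x (hxA b ε'),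
      Finset.mul_sum, Finset.sum_mul]
    refine Finset.sum_congr rfl fun p _ => ?_
    rw [hTdef]
    simp only [mul_inv]
    ring
  -- rewrite the full sum
  have hsum1 : ∑ ε : Fin (m+1) → Bool,
      1 / ∏ i : Fin (m+1), ∏ j ∈ Finset.Ici i, (sgn (ε i) * t i + sgn (ε j) * t j)
      = ∑ p : Fin (m+1), ∑ z : Bool × (Fin m → Bool), T z.1 z.2 p := by
    rw [← Equiv.sum_comp (Fin.consEquiv fun _ => Bool)]
    rw [Finset.sum_congr rfl fun z _ => key z.1 z.2]
    exact Finset.sum_comm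
  rw [hsum1, Fin.sum_univ_succ]
  have part0 : ∑ z : Bool × (Fin m → Bool), T z.1 z.2 0 = 0 := by
    rw [Fintype.sum_prod_type, Fintype.sum_bool, ← Finset.sum_add_distrib]
    refine Finset.sum_eq_zero fun ε' _ => ?_
    have harg : ∀ b : Bool, T b ε' 0 = (2 * (sgn b)^(m+1) * E ε' *
        ((x - 0) * ((sgn b)^m * ∏ k : Fin m, (sgn (ε' k) * t k.succ))))⁻¹ := by
      intro b
      simp only [hTdef]
      have hW : ∏ q ∈ univ.erase (0 : Fin (m+1)), (A b ε' 0 - A b ε' q)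
          = (sgn b)^m * ∏ k : Fin m, (sgn (ε' k) * t k.succ) := by
        rw [prod_erase_zero (fun q => A b ε' 0 - A b ε' q), hAdef]
        simp only [Fin.cons_zero, Fin.cons_succ, zero_sub, neg_neg]
        rw [Finset.prod_mul_distrib, Finset.prod_const, Finset.card_univ, Fintype.card_fin]
      have hA0 : A b ε' 0 = 0 := by simp only [hAdef, Fin.cons_zero]
      rw [hW, hA0]
    rw [harg true, harg false,
      show sgn true = (1:ℂ) from rfl, show sgn false = (-1:ℂ) from rfl]
    have hsign : ((-1 : ℂ))^(m+1) * (-1 : ℂ)^m = -1 := by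
      rw [← pow_add]
      exact Odd.neg_one_pow ⟨m, by ring⟩
    have harg2 : (2 * (-1 : ℂ)^(m+1) * E ε' *
        ((x - 0) * ((-1 : ℂ)^m * ∏ k : Fin m, (sgn (ε' k) * t k.succ))))
        = -(2 * (1 : ℂ)^(m+1) * E ε' *
        ((x - 0) * ((1 : ℂ)^m * ∏ k : Fin m, (sgn (ε' k) * t k.succ)))) := by
      rw [show (2 * (-1 : ℂ)^(m+1) * E ε' *
        ((x - 0) * ((-1 : ℂ)^m * ∏ k : Fin m, (sgn (ε' k) * t k.succ))))
        = ((-1 : ℂ)^(m+1) * (-1 : ℂ)^m) * (2 * E ε' *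
          ((x - 0) * (∏ k : Fin m, (sgn (ε' k) * t k.succ)))) from by ring, hsign]
      ring
    rw [harg2, inv_neg, add_neg_cancel]
  have partsucc : ∀ k : Fin m, ∑ z : Bool × (Fin m → Bool), T z.1 z.2 k.succ = 0 := by
    intro k
    have hflip : ∀ (b : Bool) (ε' : Fin m → Bool),
        T b ε' k.succ + T (!b) (Function.update ε' k (!(ε' k))) k.succ = 0 := by
      intro b ε'
      set ε'' : Fin m → Bool := Function.update ε' k (!(ε' k)) with hε''
      have hσ : sgn (ε'' k) = -sgn (ε' k) := by
        rw [hε'', Function.update_self, sgn_not]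
      have hσl : ∀ l, l ≠ k → sgn (ε'' l) = sgn (ε' l) := fun l hl => by
        rw [hε'', Function.update_of_ne hl]
      set w : ℂ := sgn (ε' k) * t k.succ with hw
      set Qp : ℂ := ∏ l ∈ univ.erase k, (w + sgn (ε' l) * t l.succ) with hQp
      set Qm : ℂ := ∏ l ∈ univ.erase k, (-w + sgn (ε' l) * t l.succ) with hQm
      set R : ℂ := ∏ i : Fin m, ∏ j ∈ Finset.Ici i,
        (if i = k ∨ j = k then (1:ℂ) else (sgn (ε' i) * t i.succ + sgn (ε' j) * t j.succ)) with hRdef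
      have hE1 : E ε' = ((w + w) * Qp) * R := by
        simp only [hEdef]
        rw [prod_pairs_split (fun i j => sgn (ε' i) * t i.succ + sgn (ε' j) * t j.succ)
          (fun i j => by ring) k]
        congr 1
        rw [← Finset.mul_prod_erase _ _ (Finset.mem_univ k)]
      have hE2 : E ε'' = (((-w) + (-w)) * Qm) * R := by
        simp only [hEdef]
        rw [prod_pairs_split (fun i j => sgn (ε'' i) * t i.succ + sgn (ε'' j) * t j.succ)
          (fun i j => by ring) k]
        congr 1
        · rw [← Finset.mul_prod_erase _ _ (Finset.mem_univ k)]
          beta_reduce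
          rw [hσ]
          congr 1
          · rw [hw]; ring
          · refine Finset.prod_congr rfl fun l hl => ?_
            rw [hσl l (Finset.mem_erase.mp hl).1, hw, neg_mul]
        · refine Finset.prod_congr rfl fun i _ => Finset.prod_congr rfl fun j _ => ?_
          by_cases hij : i = k ∨ j = k
          · rw [if_pos hij, if_pos hij]
          · push_neg at hij
            rw [if_neg (by tauto), if_neg (by tauto), hσl i hij.1, hσl j hij.2]
      have hP : A b ε' k.succ = -(sgn b * w) := by
        simp only [hAdef, Fin.cons_succ, hw]
      have hP' : A (!b) ε'' k.succ = -(sgn b * w) := by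
        simp only [hAdef, Fin.cons_succ]
        rw [sgn_not, hσ, hw]; ring
      have hW1 : ∏ q ∈ univ.erase (Fin.succ k), (A b ε' k.succ - A b ε' q)
          = -(sgn b * w) * ((sgn b)^((univ.erase k).card) * Qm) := by
        rw [prod_erase_succ k (fun q => A b ε' k.succ - A b ε' q)]
        simp only [hAdef, Fin.cons_zero, Fin.cons_succ, sub_zero]
        congr 1
        rw [Finset.prod_congr rfl (fun l _ => show
              -(sgn b * (sgn (ε' k) * t k.succ)) - -(sgn b * (sgn (ε' l) * t l.succ))
                = sgn b * (-w + sgn (ε' l) * t l.succ) from by rw [hw]; ring),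
          Finset.prod_mul_distrib, Finset.prod_const]
      have hW2 : ∏ q ∈ univ.erase (Fin.succ k), (A (!b) ε'' k.succ - A (!b) ε'' q)
          = -(sgn b * w) * (((-1)^((univ.erase k).card) * (sgn b)^((univ.erase k).card)) * Qp) := by
        rw [prod_erase_succ k (fun q => A (!b) ε'' k.succ - A (!b) ε'' q)]
        simp only [hAdef, Fin.cons_zero, Fin.cons_succ, sub_zero]
        congr 1
        rw [sgn_not, hσ]
        rw [Finset.prod_congr rfl (fun l hl => show
              -(-sgn b * (-sgn (ε' k) * t k.succ)) - -(-sgn b * (sgn (ε'' l) * t l.succ))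
                = (-(sgn b)) * (w + sgn (ε' l) * t l.succ) from by
                rw [hσl l (Finset.mem_erase.mp hl).1, hw]; ring),
          Finset.prod_mul_distrib, Finset.prod_const, neg_pow]
      have hT1 : T b ε' k.succ = (2 * (sgn b)^(m+1) * (((w + w) * Qp) * R) *
          ((x - -(sgn b * w)) * (-(sgn b * w) * ((sgn b)^((univ.erase k).card) * Qm))))⁻¹ := by
        simp only [hTdef]
        rw [hE1, hW1, hP]
      have hT2 : T (!b) ε'' k.succ = (2 * ((-1)^(m+1) * (sgn b)^(m+1)) *
          ((((-w) + (-w)) * Qm) * R) *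
          ((x - -(sgn b * w)) * (-(sgn b * w) *
            (((-1)^((univ.erase k).card) * (sgn b)^((univ.erase k).card)) * Qp))))⁻¹ := by
        simp only [hTdef]
        rw [hE2, hW2, hP', sgn_not, neg_pow]
      have hm1 : 1 ≤ m := k.pos
      have hcard : (univ.erase k).card = m - 1 := by
        rw [Finset.card_erase_of_mem (Finset.mem_univ k), Finset.card_univ, Fintype.card_fin]
      have hsign : ((-1:ℂ))^(m+1) * (-1:ℂ)^((univ.erase k).card) = 1 := by
        rw [← pow_add, hcard, show m + 1 + (m - 1) = 2 * m from by omega, pow_mul]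
        norm_num
      rw [hT1, hT2]
      have hkey : (2 * ((-1:ℂ)^(m+1) * (sgn b)^(m+1)) * ((((-w) + (-w)) * Qm) * R) *
          ((x - -(sgn b * w)) * (-(sgn b * w) *
            (((-1)^((univ.erase k).card) * (sgn b)^((univ.erase k).card)) * Qp))))
          = -(2 * (sgn b)^(m+1) * (((w + w) * Qp) * R) *
          ((x - -(sgn b * w)) * (-(sgn b * w) * ((sgn b)^((univ.erase k).card) * Qm)))) := by
        rw [show (2 * ((-1:ℂ)^(m+1) * (sgn b)^(m+1)) * ((((-w) + (-w)) * Qm) * R) *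
          ((x - -(sgn b * w)) * (-(sgn b * w) *
            (((-1)^((univ.erase k).card) * (sgn b)^((univ.erase k).card)) * Qp))))
          = ((-1:ℂ)^(m+1) * (-1:ℂ)^((univ.erase k).card)) *
            (-(2 * (sgn b)^(m+1) * (((w + w) * Qp) * R) *
            ((x - -(sgn b * w)) * (-(sgn b * w) * ((sgn b)^((univ.erase k).card) * Qm)))))
          from by ring, hsign, one_mul]
      rw [hkey, inv_neg, add_neg_cancel]
    refine Finset.sum_involution (fun z _ => (!z.1, Function.update z.2 k (!(z.2 k))))
      (fun z _ => hflip z.1 z.2) (fun z _ _ => by simp [Prod.ext_iff])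
      (fun z _ => Finset.mem_univ _) (fun z _ => ?_)
    simp [Function.update_idem, Function.update_self, Bool.not_not, Function.update_eq_self]
  rw [part0, Finset.sum_eq_zero fun k _ => partsucc k, add_zero]
end
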